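/- Let G be a connected graph with v vertices and let L(G) be the graph obtained by attaching one new leaf to each vertex of G. Then the Morse complex M(L(G)) is homotopy equivalent to the sphere S^{v-1}. -/

import Mathlib

open Finset

/-- An abstract simplicial complex on vertex type `V`. -/
structure SComplex (V : Type*) where
  faces : Finset V → Prop
  not_empty : ¬ faces ∅
  down_closed : ∀ {σ τ : Finset V}, faces τ → σ ⊆ τ → σ.Nonempty → faces σ

/-- The complex generated by a set of simplices (downward closure). -/
def ofGens {V : Type*} (gens : Set (Finset V)) : SComplex V where
  faces σ := σ.Nonempty ∧ ∃ τ ∈ gens, σ ⊆ τ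
  not_empty h := by simpa using h.1
  down_closed := by
    rintro σ τ ⟨-, τ', hτ', hsub'⟩ hsub hne
    exact ⟨hne, τ', hτ', hsub.trans hsub'⟩

/-- A primitive (gradient) vector field on `K`: a single regular pair `(σ, τ)`
with `σ` a codimension-one face of `τ`. -/
structure VPair {V : Type*} (K : SComplex V) where
  lo : Finset V
  hi : Finset V
  lo_face : K.faces lo
  hi_face : K.faces hi
  lo_sub : lo ⊆ hi
  card_eq : hi.card = lo.card + 1

noncomputable instance {V : Type*} (K : SComplex V) : DecidableEq (VPair K) :=
  Classical.decEq _

/-- Two primitive pairs share no simplex. -/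
def VPair.Compatible {V : Type*} {K : SComplex V} (p q : VPair K) : Prop :=
  p.lo ≠ q.lo ∧ p.lo ≠ q.hi ∧ p.hi ≠ q.lo ∧ p.hi ≠ q.hi

/-- A discrete vector field: each simplex occurs in at most one pair. -/
def IsDVF {V : Type*} {K : SComplex V} (W : Set (VPair K)) : Prop :=
  ∀ p ∈ W, ∀ q ∈ W, p ≠ q → VPair.Compatible p q

/-- Existence of a nontrivial closed `V`-path. -/
def HasClosedPath {V : Type*} {K : SComplex V} (W : Set (VPair K)) : Prop :=
  ∃ k : ℕ, 0 < k ∧ ∃ c : ZMod k → VPair K, (∀ i, c i ∈ W) ∧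
    ∀ i, (c (i + 1)).lo ⊆ (c i).hi ∧ (c (i + 1)).lo ≠ (c i).lo ∧
      (c (i + 1)).lo.card + 1 = (c i).hi.card

/-- A gradient vector field: a discrete vector field with no nontrivial closed path. -/
def IsGVF {V : Type*} {K : SComplex V} (W : Set (VPair K)) : Prop :=
  IsDVF W ∧ ¬ HasClosedPath W

/-- The Morse complex of `K`: vertices are primitive gradient vector fields,
simplices are gradient vector fields. -/
def MorseComplex {V : Type*} (K : SComplex V) : SComplex (VPair K) where
  faces S := S.Nonempty ∧ IsGVF {p | p ∈ S}
  not_empty h := by simpa using h.1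
  down_closed := by
    rintro σ τ ⟨hne', hdvf, hnc⟩ hsub hne
    refine ⟨hne, fun p hp q hq hpq => hdvf p (hsub hp) q (hsub hq) hpq, fun h => hnc ?_⟩
    obtain ⟨k, hk, c, hc, hpath⟩ := h
    exact ⟨k, hk, c, fun i => hsub (hc i), hpath⟩

/-- The pure Morse complex: the subcomplex of `MorseComplex K` generated by the
facets of maximum dimension (maximum gradient vector fields). -/
def pureMorse {V : Type*} (K : SComplex V) : SComplex (VPair K) where
  faces S := (MorseComplex K).faces S ∧ ∃ T : Finset (VPair K), S ⊆ T ∧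
      (MorseComplex K).faces T ∧
      ∀ T' : Finset (VPair K), (MorseComplex K).faces T' → T'.card ≤ T.card
  not_empty h := (MorseComplex K).not_empty h.1
  down_closed := by
    rintro σ τ ⟨hτ, T, hsub', hT, hmax⟩ hsub hne
    exact ⟨(MorseComplex K).down_closed hτ hsub hne, T, hsub.trans hsub', hT, hmax⟩

/-- `σ` is a facet (maximal simplex) of `K`. -/
def IsFacet {V : Type*} (K : SComplex V) (σ : Finset V) : Prop :=
  K.faces σ ∧ ∀ τ, K.faces τ → σ ⊆ τ → σ = τ

/-- `w` dominates `w'`: every facet containing `w'` contains `w`. -/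
def Dominates {V : Type*} (K : SComplex V) (w w' : V) : Prop :=
  ∀ σ, IsFacet K σ → w' ∈ σ → w ∈ σ

/-- `K` is minimal: no vertex dominates another vertex. -/
def MinimalComplex {V : Type*} (K : SComplex V) : Prop :=
  ∀ w w' : V, K.faces {w} → K.faces {w'} → w ≠ w' → ¬ Dominates K w w'

/-- Strong collapsibility of a face predicate: a sequence of removals of
dominated vertices reaching a single point. -/
inductive SCAux {V : Type*} : (Finset V → Prop) → Prop
  | point (F : Finset V → Prop) (v : V) (h : ∀ σ, F σ ↔ σ = {v}) : SCAux F
  | step (F : Finset V → Prop) (w w' : V) (hne : w ≠ w') (hw : F {w}) (hw' : F {w'})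
      (hdom : ∀ σ, (F σ ∧ ∀ τ, F τ → σ ⊆ τ → σ = τ) → w' ∈ σ → w ∈ σ)
      (h : SCAux (fun σ => F σ ∧ w' ∉ σ)) : SCAux F

def StronglyCollapsible {V : Type*} (K : SComplex V) : Prop := SCAux K.faces

/-- `F` strongly collapses to `G` by a sequence of removals of dominated vertices. -/
inductive SCTo {V : Type*} : (Finset V → Prop) → (Finset V → Prop) → Prop
  | refl (F : Finset V → Prop) : SCTo F F
  | step (F G : Finset V → Prop) (w w' : V) (hne : w ≠ w') (hw : F {w}) (hw' : F {w'})
      (hdom : ∀ σ, (F σ ∧ ∀ τ, F τ → σ ⊆ τ → σ = τ) → w' ∈ σ → w ∈ σ)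
      (h : SCTo (fun σ => F σ ∧ w' ∉ σ) G) : SCTo F G

/-- Collapsibility (Forman): removal of free pairs down to a point. -/
inductive CollAux {V : Type*} : (Finset V → Prop) → Prop
  | point (F : Finset V → Prop) (v : V) (h : ∀ σ, F σ ↔ σ = {v}) : CollAux F
  | step (F : Finset V → Prop) (σ τ : Finset V) (hστ : σ ⊂ τ) (hσ : F σ) (hτ : F τ)
      (hfree : ∀ ρ, F ρ → σ ⊂ ρ → ρ = τ)
      (h : CollAux (fun ρ => F ρ ∧ ρ ≠ σ ∧ ρ ≠ τ)) : CollAux F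

def Collapsible {V : Type*} (K : SComplex V) : Prop := CollAux K.faces

/-- The degree of a vertex: the number of edges of `K` containing it. -/
noncomputable def sdeg {V : Type*} (K : SComplex V) (x : V) : ℕ :=
  Set.ncard {σ : Finset V | K.faces σ ∧ σ.card = 2 ∧ x ∈ σ}

/-- Image of a finset, with a classical decidability instance. -/
noncomputable def fimage {V W : Type*} (f : V → W) (σ : Finset V) : Finset W :=
  haveI := Classical.decEq W
  σ.image f

/-- An isomorphism between two simplicial complexes given by face predicates. -/
structure ComplexIso {V W : Type*} (F : Finset V → Prop) (G : Finset W → Prop) where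
  toFun : V → W
  invFun : W → V
  left_inv : ∀ x, F {x} → invFun (toFun x) = x
  right_inv : ∀ y, G {y} → toFun (invFun y) = y
  map_face : ∀ σ, F σ → G (fimage toFun σ)
  inv_face : ∀ τ, G τ → F (fimage invFun τ)

/-- The join of two simplicial complexes. -/
def sJoin {V W : Type*} [DecidableEq V] [DecidableEq W] (K : SComplex V) (L : SComplex W) :
    SComplex (V ⊕ W) :=
  ofGens {σ | ∃ α β, (K.faces α ∨ α = ∅) ∧ (L.faces β ∨ β = ∅) ∧
    σ = α.image Sum.inl ∪ β.image Sum.inr}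

/-- The disjoint union of two simplicial complexes. -/
def sDisjUnion {V W : Type*} [DecidableEq V] [DecidableEq W] (K : SComplex V) (L : SComplex W) :
    SComplex (V ⊕ W) :=
  ofGens ({σ | ∃ α, K.faces α ∧ σ = α.image Sum.inl} ∪
          {σ | ∃ β, L.faces β ∧ σ = β.image Sum.inr})

/-- The simplicial complex of a simple graph (vertices and edges). -/
def graphComplex {V : Type*} [DecidableEq V] (G : SimpleGraph V) : SComplex V :=
  ofGens ({σ | ∃ x, σ = {x}} ∪ {σ | ∃ x y, G.Adj x y ∧ σ = ({x, y} : Finset V)})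

/-- Attach a leaf (pendant edge) to `K` at the vertex `x`. -/
def attachLeaf {V : Type*} [DecidableEq V] (K : SComplex V) (x : V) : SComplex (V ⊕ Unit) :=
  ofGens ({σ | ∃ α, K.faces α ∧ σ = α.image Sum.inl} ∪
          {({Sum.inl x, Sum.inr ()} : Finset (V ⊕ Unit))})

/-- The cycle graph on `ZMod n`. -/
def cycleGraph (n : ℕ) : SimpleGraph (ZMod n) :=
  SimpleGraph.fromRel (fun i j => j = i + 1)

/-- Attach one new leaf to every vertex of a graph. -/
def addLeaves {V : Type*} [DecidableEq V] (G : SimpleGraph V) : SComplex (V ⊕ V) :=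
  ofGens ({σ | ∃ x y, G.Adj x y ∧ σ = ({Sum.inl x, Sum.inl y} : Finset (V ⊕ V))} ∪
          {σ | ∃ u, σ = ({Sum.inl u, Sum.inr u} : Finset (V ⊕ V))})

/-- The geometric realization of `K`, inside `V → ℝ`. -/
def realization {V : Type*} (K : SComplex V) : Set (V → ℝ) :=
  {f | ∃ σ, K.faces σ ∧ (∀ x, 0 ≤ f x) ∧ (∀ x, f x ≠ 0 → x ∈ σ) ∧ ∑ x ∈ σ, f x = 1}

/-- A Hasse-diagram edge of a poset: a covering pair. -/
structure HEdge (P : Type*) [PartialOrder P] where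
  lo : P
  hi : P
  cov : lo ⋖ hi

noncomputable instance {P : Type*} [PartialOrder P] : DecidableEq (HEdge P) :=
  Classical.decEq _

def HEdge.Compat {P : Type*} [PartialOrder P] (p q : HEdge P) : Prop :=
  p.lo ≠ q.lo ∧ p.lo ≠ q.hi ∧ p.hi ≠ q.lo ∧ p.hi ≠ q.hi

def HasPosetCycle {P : Type*} [PartialOrder P] (W : Set (HEdge P)) : Prop :=
  ∃ k : ℕ, 0 < k ∧ ∃ c : ZMod k → HEdge P, (∀ i, c i ∈ W) ∧
    ∀ i, (c (i + 1)).lo ⋖ (c i).hi ∧ (c (i + 1)).lo ≠ (c i).lo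

/-- The generalized Morse complex `f(P)` of a poset: simplices are acyclic
matchings of the Hasse diagram of `P`. -/
def genMorse (P : Type*) [PartialOrder P] : SComplex (HEdge P) where
  faces S := S.Nonempty ∧ (∀ p ∈ S, ∀ q ∈ S, p ≠ q → HEdge.Compat p q) ∧
    ¬ HasPosetCycle {p | p ∈ S}
  not_empty h := by simpa using h.1
  down_closed := by
    rintro σ τ ⟨-, hm, hc⟩ hsub hne
    refine ⟨hne, fun p hp q hq h => hm p (hsub hp) q (hsub hq) h, fun h => hc ?_⟩
    obtain ⟨k, hk, c, hc', hp⟩ := h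
    exact ⟨k, hk, c, fun i => hsub (hc' i), hp⟩

/-- The automorphism group of a simplicial complex, as a subgroup of `Perm V`. -/
def autGroup {V : Type*} [DecidableEq V] (K : SComplex V) : Subgroup (Equiv.Perm V) where
  carrier := {e | ∀ σ : Finset V, K.faces σ ↔ K.faces (σ.image e)}
  one_mem' := by intro σ; simp
  mul_mem' := by
    intro a b ha hb σ
    rw [hb σ, ha (σ.image b)]
    simp [Finset.image_image, Equiv.Perm.coe_mul]
  inv_mem' := by
    intro a ha σ
    have := ha (σ.image ⇑a⁻¹)
    simpa [Finset.image_image, Function.comp_def, Equiv.Perm.inv_def, Equiv.apply_symm_apply,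
      Finset.image_id'] using this.symm

/-- The full subcomplex of `K` on a set `S` of vertices. -/
def restrictTo {V : Type*} (K : SComplex V) (S : Set V) : Finset V → Prop :=
  fun σ => K.faces σ ∧ ∀ x ∈ σ, x ∈ S

/-- `S` spans a fully connected subcomplex: `K = (K∣S) * (K∣Sᶜ)`. -/
def FullyConnected {V : Type*} [DecidableEq V] (K : SComplex V) (S : Set V) : Prop :=
  ∀ σ : Finset V, K.faces σ ↔ (σ.Nonempty ∧ ∃ α β : Finset V,
    (restrictTo K S α ∨ α = ∅) ∧ ((K.faces β ∧ ∀ x ∈ β, x ∉ S) ∨ β = ∅) ∧ σ = α ∪ β)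

/-- The primitive pair `(x, xy)` on an edge `{x,y}`. -/
def edgePair {V : Type*} [DecidableEq V] (K : SComplex V) (x y : V) (hxy : x ≠ y)
    (h : K.faces {x, y}) : VPair K where
  lo := {x}
  hi := {x, y}
  lo_face := K.down_closed h (by simp) (Finset.singleton_nonempty x)
  hi_face := h
  lo_sub := by simp
  card_eq := by
    rw [Finset.card_singleton, Finset.card_insert_of_notMem (by simp [hxy]),
      Finset.card_singleton]

/-!
Every primitive vector `(b, bc)` on an edge of `G` is dominated in `M(L(G))` by the leaf vector
`(b', b'b)`: adding it to a gradient field containing `(b, bc)` keeps the field gradient, because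
no `V`-path can enter the leaf vertex `b'`. Deleting a dominated vertex is a homotopy equivalence
(slide the barycentric weight of the deleted vertex onto its dominator along straight segments),
so `M(L(G))` deforms onto the complex spanned by the `2v` vectors on leaf edges. There the two
vectors on one leaf edge are incompatible and all others are compatible, so this complex is the
boundary of the `v`-dimensional cross-polytope, i.e. the join of `v` copies of `S^0`, and its
realization is the unit sphere of `ℓ¹`, radially homeomorphic to `S^{v-1}`.
-/

section Realization

variable {X : Type*}

def IsProbOn (σ : Finset X) (f : X → ℝ) : Prop :=
  (∀ x, 0 ≤ f x) ∧ (∀ x, f x ≠ 0 → x ∈ σ) ∧ ∑ x ∈ σ, f x = 1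

-- `realization K` unfolds to `realizationOf K.faces`.
def realizationOf (F : Finset X → Prop) : Set (X → ℝ) :=
  {f | ∃ σ, F σ ∧ IsProbOn σ f}

theorem realizationOf_mono {F F' : Finset X → Prop} (h : ∀ σ, F σ → F' σ) :
    realizationOf F ⊆ realizationOf F' := by
  rintro f ⟨σ, hσ, hf⟩
  exact ⟨σ, h σ hσ, hf⟩

theorem IsProbOn.mono {σ τ : Finset X} {f : X → ℝ} (hf : IsProbOn σ f) (h : σ ⊆ τ) :
    IsProbOn τ f := by
  obtain ⟨hpos, hsupp, hsum⟩ := hf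
  refine ⟨hpos, fun x hx => h (hsupp x hx), ?_⟩
  rw [← Finset.sum_subset h fun x _ hx => not_not.1 (mt (hsupp x) hx), hsum]

theorem convex_isProbOn (σ : Finset X) : Convex ℝ {f : X → ℝ | IsProbOn σ f} := by
  rintro f ⟨hf₀, hf₁, hf₂⟩ g ⟨hg₀, hg₁, hg₂⟩ a b ha hb hab
  refine ⟨fun x => add_nonneg (mul_nonneg ha (hf₀ x)) (mul_nonneg hb (hg₀ x)), fun x hx => ?_, ?_⟩
  · by_contra hxσ
    simp [not_not.1 (mt (hf₁ x) hxσ), not_not.1 (mt (hg₁ x) hxσ)] at hx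
  · simp [Finset.sum_add_distrib, ← Finset.mul_sum, hf₂, hg₂, hab]

end Realization

section SegmentRetraction

variable {E : Type*} [AddCommGroup E] [Module ℝ E] [TopologicalSpace E] [ContinuousAdd E]
  [ContinuousSMul ℝ E]

def ContinuousMap.HomotopyEquiv.ofSegmentRetraction {s t : Set E} (hst : s ⊆ t) (r : C(t, s))
    (hr : ∀ x : s, r (Set.inclusion hst x) = x) (hseg : ∀ x : t, segment ℝ (r x : E) x ⊆ t) :
    ContinuousMap.HomotopyEquiv t s where
  toFun := r
  invFun := ⟨Set.inclusion hst, continuous_inclusion hst⟩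
  left_inv := ⟨{
    toFun := fun p => ⟨(1 - (p.1 : ℝ)) • (r p.2 : E) + (p.1 : ℝ) • (p.2 : E),
      hseg p.2 ⟨1 - p.1, p.1, sub_nonneg.2 p.1.2.2, p.1.2.1, sub_add_cancel 1 _, rfl⟩⟩
    continuous_toFun := by fun_prop
    map_zero_left := fun x => by simp
    map_one_left := fun x => by simp }⟩
  right_inv := by
    convert ContinuousMap.Homotopic.refl (ContinuousMap.id s)
    ext x
    exact congrArg Subtype.val (hr x)

end SegmentRetraction

section StrongCollapse

variable {X : Type*} [DecidableEq X]

def transferMass (w w' : X) (f : X → ℝ) : X → ℝ :=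
  fun x => if x = w' then 0 else if x = w then f w + f w' else f x

variable {w w' : X} {f : X → ℝ}

theorem continuous_transferMass (w w' : X) : Continuous (transferMass w w') :=
  continuous_pi fun x => by unfold transferMass; split_ifs <;> fun_prop

theorem transferMass_of_eq_zero (h : f w' = 0) : transferMass w w' f = f := by
  funext x
  unfold transferMass
  split_ifs with h₁ h₂
  · rw [h₁, h]
  · rw [h₂, h, add_zero]
  · rfl

theorem transferMass_eq (hne : w ≠ w') (x : X) :
    transferMass w w' f x = f x + (if x = w then f w' else 0) - (if x = w' then f w' else 0) := by
  unfold transferMass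
  split_ifs with h₁ h₂ <;> subst_vars <;> simp_all

theorem IsProbOn.transferMass_erase {τ : Finset X} (hf : IsProbOn τ f) (hne : w ≠ w') (hw : w ∈ τ)
    (hw' : w' ∈ τ) : IsProbOn (τ.erase w') (transferMass w w' f) := by
  obtain ⟨hpos, hsupp, hsum⟩ := hf
  refine ⟨fun x => ?_, fun x hx => ?_, ?_⟩
  · unfold transferMass
    split_ifs
    exacts [le_rfl, add_nonneg (hpos w) (hpos w'), hpos x]
  · unfold transferMass at hx
    split_ifs at hx with h₁ h₂
    · exact absurd rfl hx
    · exact Finset.mem_erase.2 ⟨h₁, h₂ ▸ hw⟩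
    · exact Finset.mem_erase.2 ⟨h₁, hsupp x hx⟩
  · have hzero : transferMass w w' f w' = 0 := if_pos rfl
    calc ∑ x ∈ τ.erase w', transferMass w w' f x
        = ∑ x ∈ τ, transferMass w w' f x := by
          rw [← Finset.sum_erase_add _ _ hw', hzero, add_zero]
      _ = ∑ x ∈ τ, f x := by
          simp only [transferMass_eq hne, Finset.sum_sub_distrib, Finset.sum_add_distrib,
            Finset.sum_ite_eq', hw, hw', if_true]
          ring
      _ = 1 := hsum

variable {F : Finset X → Prop}

theorem exists_face_transferMass (hne : w ≠ w')
    (hdc : ∀ {σ τ : Finset X}, F τ → σ ⊆ τ → σ.Nonempty → F σ)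
    (hdom : ∀ σ, F σ → w' ∈ σ → F (insert w σ)) (hf : f ∈ realizationOf F) :
    ∃ τ, F τ ∧ IsProbOn τ f ∧ F (τ.erase w') ∧ IsProbOn (τ.erase w') (transferMass w w' f) := by
  obtain ⟨σ, hσ, hfσ⟩ := hf
  by_cases hw'σ : w' ∈ σ
  · have hfτ := hfσ.mono (Finset.subset_insert w σ)
    have hwτ : w ∈ (insert w σ).erase w' := Finset.mem_erase.2 ⟨hne, Finset.mem_insert_self w σ⟩
    exact ⟨insert w σ, hdom σ hσ hw'σ, hfτ, hdc (hdom σ hσ hw'σ) (Finset.erase_subset _ _) ⟨w, hwτ⟩,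
      hfτ.transferMass_erase hne (Finset.mem_insert_self w σ) (Finset.mem_insert_of_mem hw'σ)⟩
  · have hσ' : σ.erase w' = σ := Finset.erase_eq_of_notMem hw'σ
    rw [transferMass_of_eq_zero (not_not.1 (mt (hfσ.2.1 w') hw'σ))]
    exact ⟨σ, hσ, hfσ, hσ'.symm ▸ hσ, hσ'.symm ▸ hfσ⟩

theorem nonempty_homotopyEquiv_delete_of_dominated (hne : w ≠ w')
    (hdc : ∀ {σ τ : Finset X}, F τ → σ ⊆ τ → σ.Nonempty → F σ)
    (hdom : ∀ σ, F σ → w' ∈ σ → F (insert w σ)) :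
    Nonempty (ContinuousMap.HomotopyEquiv (realizationOf F)
      (realizationOf fun σ => F σ ∧ w' ∉ σ)) := by
  have hmem : ∀ f ∈ realizationOf F, transferMass w w' f ∈ realizationOf fun σ => F σ ∧ w' ∉ σ :=
    fun f hf => by
      obtain ⟨τ, -, -, hτ', hfτ'⟩ := exists_face_transferMass hne hdc hdom hf
      exact ⟨τ.erase w', ⟨hτ', Finset.notMem_erase w' τ⟩, hfτ'⟩
  refine ⟨.ofSegmentRetraction (realizationOf_mono fun _ => And.left)
    ⟨fun f => ⟨transferMass w w' f, hmem f f.2⟩,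
      ((continuous_transferMass w w').comp continuous_subtype_val).subtype_mk _⟩
    (fun f => ?_) (fun f => ?_)⟩
  · obtain ⟨σ, ⟨-, hw'σ⟩, hfσ⟩ := f.2
    exact Subtype.ext (transferMass_of_eq_zero (not_not.1 (mt (hfσ.2.1 w') hw'σ)))
  · obtain ⟨τ, hτ, hfτ, -, hfτ'⟩ := exists_face_transferMass hne hdc hdom f.2
    exact ((convex_isProbOn τ).segment_subset (hfτ'.mono (Finset.erase_subset w' τ)) hfτ).trans
      fun g hg => ⟨τ, hτ, hg⟩

theorem nonempty_homotopyEquiv_deleteFinset_of_dominated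
    (hdc : ∀ {σ τ : Finset X}, F τ → σ ⊆ τ → σ.Nonempty → F σ) (S : Finset X)
    (hS : ∀ w' ∈ S, ∃ w ∉ S, ∀ σ, F σ → w' ∈ σ → F (insert w σ)) :
    Nonempty (ContinuousMap.HomotopyEquiv (realizationOf F)
      (realizationOf fun σ => F σ ∧ Disjoint S σ)) := by
  induction S using Finset.induction with
  | empty =>
    have hF : (fun σ => F σ ∧ Disjoint (∅ : Finset X) σ) = F := funext fun σ => by simp
    rw [hF]
    exact ⟨ContinuousMap.HomotopyEquiv.refl _⟩
  | @insert w' S hw'S ih =>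
    obtain ⟨e⟩ := ih fun v hv => by
      obtain ⟨w, hw, hdom⟩ := hS v (Finset.mem_insert_of_mem hv)
      exact ⟨w, fun h => hw (Finset.mem_insert_of_mem h), hdom⟩
    obtain ⟨w, hw, hdom⟩ := hS w' (Finset.mem_insert_self w' S)
    obtain ⟨e'⟩ := nonempty_homotopyEquiv_delete_of_dominated (F := fun σ => F σ ∧ Disjoint S σ)
      (fun h : w = w' => hw (h ▸ Finset.mem_insert_self w' S))
      (fun hτ hστ hσ => ⟨hdc hτ.1 hστ hσ, hτ.2.mono_right hστ⟩)
      (fun σ hσ hw'σ => ⟨hdom σ hσ.1 hw'σ,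
        Finset.disjoint_insert_right.2 ⟨fun h => hw (Finset.mem_insert_of_mem h), hσ.2⟩⟩)
    have hF : (fun σ => (F σ ∧ Disjoint S σ) ∧ w' ∉ σ) = fun σ => F σ ∧ Disjoint (insert w' S) σ :=
      funext fun σ => propext <| by rw [Finset.disjoint_insert_left]; tauto
    exact ⟨(e.trans e').trans (Homeomorph.setCongr (congrArg realizationOf hF)).toHomotopyEquiv⟩

end StrongCollapse

section GradientFields

variable {X : Type*} {K : SComplex X}

theorem VPair.ext {p q : VPair K} (hlo : p.lo = q.lo) (hhi : p.hi = q.hi) : p = q := by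
  cases p; cases q; cases hlo; cases hhi; rfl

instance VPair.finite [Finite X] : Finite (VPair K) :=
  Finite.of_injective (fun p => (p.lo, p.hi)) fun _ _ h =>
    VPair.ext (congrArg Prod.fst h) (congrArg Prod.snd h)

theorem VPair.lo_nonempty (p : VPair K) : p.lo.Nonempty :=
  Finset.nonempty_iff_ne_empty.2 fun h => K.not_empty (h ▸ p.lo_face)

theorem VPair.lo_ne_hi_of_card_eq {p q : VPair K} (h : p.lo.card = q.lo.card) : p.lo ≠ q.hi :=
  fun hpq => by have := q.card_eq; rw [← hpq, h] at this; omega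

theorem VPair.eq_of_hi_subset_pair [DecidableEq X] (p : VPair K) {x y : X}
    (h : p.hi ⊆ {x, y}) : p.hi = {x, y} ∧ (p.lo = {x} ∨ p.lo = {y}) := by
  have hlo := p.lo_nonempty.card_pos
  have hxy := Finset.card_le_two (a := x) (b := y)
  have hhi : p.hi = {x, y} :=
    Finset.eq_of_subset_of_card_le h (by rw [p.card_eq]; omega)
  obtain ⟨a, ha⟩ := Finset.card_eq_one.1 (show p.lo.card = 1 by
    have := Finset.card_le_card h; rw [p.card_eq] at this; omega)
  have hamem : a ∈ ({x, y} : Finset X) := hhi ▸ p.lo_sub (ha ▸ Finset.mem_singleton_self a)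
  rw [Finset.mem_insert, Finset.mem_singleton] at hamem
  exact ⟨hhi, hamem.imp (fun h : a = x => h ▸ ha) (fun h : a = y => h ▸ ha)⟩

theorem VPair.Compatible.symm {p q : VPair K} (h : p.Compatible q) : q.Compatible p :=
  ⟨h.1.symm, h.2.2.1.symm, h.2.1.symm, h.2.2.2.symm⟩

-- No `V`-path can enter `q`, so `q` lies on no closed path.
theorem IsGVF.insert {W : Set (VPair K)} (hW : IsGVF W) {q : VPair K}
    (hq : ∀ p ∈ W, q.lo ⊆ p.hi → p = q) : IsGVF (insert q W) := by
  have hcompat : ∀ p ∈ W, p ≠ q → q.Compatible p := fun p hp hpq =>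
    ⟨fun h => hpq (hq p hp (h ▸ p.lo_sub)), fun h => hpq (hq p hp h.subset),
      fun h => hpq (hq p hp (q.lo_sub.trans (h ▸ p.lo_sub))),
      fun h => hpq (hq p hp (h ▸ q.lo_sub))⟩
  refine ⟨fun p hp p' hp' hpp' => ?_,
    fun ⟨k, hk, c, hc, hpath⟩ => hW.2 ⟨k, hk, c, fun i => ?_, hpath⟩⟩
  · rcases hp with rfl | hp <;> rcases hp' with rfl | hp'
    · exact absurd rfl hpp'
    · exact hcompat p' hp' (Ne.symm hpp')
    · exact (hcompat p hp hpp').symm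
    · exact hW.1 p hp p' hp' hpp'
  · refine (hc i).resolve_left fun hi => ?_
    obtain ⟨hsub, hne, -⟩ := hpath (i - 1)
    rw [sub_add_cancel, hi] at hsub hne
    rcases hc (i - 1) with h | h
    · exact hne (h ▸ rfl)
    · exact hne (hq _ h hsub ▸ rfl)

end GradientFields

section CrossPolytope

variable {ι X : Type*} [Fintype ι] {R : ι ⊕ ι → X}

-- The boundary of the cross-polytope: the join of the `0`-spheres `{R a, R a.swap}`.
def crossPolytopeFaces (R : ι ⊕ ι → X) (σ : Finset X) : Prop :=
  σ.Nonempty ∧ (∀ x ∈ σ, x ∈ Set.range R) ∧ ∀ a, ¬(R a ∈ σ ∧ R a.swap ∈ σ)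

theorem mem_realizationOf_crossPolytopeFaces (hR : Function.Injective R) {f : X → ℝ} :
    f ∈ realizationOf (crossPolytopeFaces R) ↔ (∀ x, 0 ≤ f x) ∧
      (∀ x, f x ≠ 0 → x ∈ Set.range R) ∧ (∀ i, f (R (.inl i)) = 0 ∨ f (R (.inr i)) = 0) ∧
      ∑ a, f (R a) = 1 := by
  classical
  have hsum : ∑ a, f (R a) = ∑ x ∈ Finset.univ.map ⟨R, hR⟩, f x :=
    (Finset.sum_map Finset.univ ⟨R, hR⟩ f).symm
  constructor
  · rintro ⟨σ, ⟨-, hrange, hanti⟩, hpos, hsupp, hσ⟩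
    refine ⟨hpos, fun x hx => hrange x (hsupp x hx), fun i => ?_, ?_⟩
    · by_contra! h
      exact hanti (.inl i) ⟨hsupp _ h.1, hsupp _ h.2⟩
    · have hσR : σ ⊆ Finset.univ.map ⟨R, hR⟩ := fun x hx => by
        obtain ⟨a, rfl⟩ := hrange x hx
        exact Finset.mem_map_of_mem _ (Finset.mem_univ a)
      rw [hsum, ← Finset.sum_subset hσR fun x _ hx => not_not.1 (mt (hsupp x) hx), hσ]
  · rintro ⟨hpos, hrange, hanti, hone⟩
    have hσ : ∑ x ∈ (Finset.univ.map ⟨R, hR⟩).filter (f · ≠ 0), f x = 1 := by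
      rw [Finset.sum_filter_ne_zero, ← hsum, hone]
    refine ⟨_, ⟨Finset.nonempty_of_sum_ne_zero (hσ ▸ one_ne_zero), fun x hx => ?_, ?_⟩,
      hpos, fun x hx => ?_, hσ⟩
    · obtain ⟨a, -, rfl⟩ := Finset.mem_map.1 (Finset.mem_filter.1 hx).1
      exact ⟨a, rfl⟩
    · rintro (i | i) ⟨h₁, h₂⟩ <;>
        rcases hanti i with h | h <;> simp_all
    · obtain ⟨a, rfl⟩ := hrange x hx
      exact Finset.mem_filter.2 ⟨Finset.mem_map_of_mem _ (Finset.mem_univ a), hx⟩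

noncomputable def crossPolytopeHomeomorph (hR : Function.Injective R) :
    realizationOf (crossPolytopeFaces R) ≃ₜ Metric.sphere (0 : PiLp 1 fun _ : ι => ℝ) 1 where
  toFun f := ⟨WithLp.toLp 1 fun i => (f : X → ℝ) (R (.inl i)) - (f : X → ℝ) (R (.inr i)), by
    obtain ⟨hpos, -, hanti, hone⟩ := (mem_realizationOf_crossPolytopeFaces hR).1 f.2
    rw [mem_sphere_zero_iff_norm, PiLp.norm_eq_of_L1, ← hone, Fintype.sum_sum_type,
      ← Finset.sum_add_distrib]
    refine Finset.sum_congr rfl fun i _ => ?_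
    rcases hanti i with h | h <;> simp [h, abs_of_nonneg (hpos _)]⟩
  invFun y := ⟨Function.extend R (Sum.elim (fun i => (y.1 i)⁺) fun i => (y.1 i)⁻) 0, by
    refine (mem_realizationOf_crossPolytopeFaces hR).2
      ⟨fun x => ?_, fun x hx => ?_, fun i => ?_, ?_⟩
    · by_cases hx : ∃ a, R a = x
      · obtain ⟨a | a, rfl⟩ := hx <;> simp [hR.extend_apply]
      · simp [Function.extend_apply' _ _ _ hx]
    · by_contra h
      exact hx (by simp [Function.extend_apply' _ _ _ h])
    · simp only [hR.extend_apply, Sum.elim_inl, Sum.elim_inr, posPart_eq_zero, negPart_eq_zero]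
      exact le_total _ _
    · simp only [hR.extend_apply, Fintype.sum_sum_type, Sum.elim_inl, Sum.elim_inr,
        ← Finset.sum_add_distrib, posPart_add_negPart]
      have := mem_sphere_zero_iff_norm.1 y.2
      rwa [PiLp.norm_eq_of_L1] at this⟩
  left_inv f := by
    obtain ⟨hpos, hrange, hanti, -⟩ := (mem_realizationOf_crossPolytopeFaces hR).1 f.2
    refine Subtype.ext (funext fun x => ?_)
    by_cases hx : ∃ a, R a = x
    · obtain ⟨a | a, rfl⟩ := hx <;> rcases hanti a with h | h <;>
        simp [hR.extend_apply, h, hpos]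
    · simp only [Function.extend_apply' _ _ _ hx, Pi.zero_apply]
      exact (not_not.1 (mt (hrange x) hx)).symm
  right_inv y := Subtype.ext (by ext i; simp [hR.extend_apply, posPart_sub_negPart])
  continuous_toFun := by
    refine Continuous.subtype_mk ((PiLp.continuous_toLp 1 _).comp (continuous_pi fun i => ?_)) _
    exact ((continuous_apply _).comp continuous_subtype_val).sub
      ((continuous_apply _).comp continuous_subtype_val)
  continuous_invFun := by
    refine Continuous.subtype_mk (continuous_pi fun x => ?_) _
    by_cases hx : ∃ a, R a = x
    · obtain ⟨a | a, rfl⟩ := hx <;> simp only [hR.extend_apply, Sum.elim_inl, Sum.elim_inr] <;>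
        fun_prop
    · simp only [Function.extend_apply' _ _ _ hx]
      fun_prop

end CrossPolytope

section UnitSphere

variable {E F : Type*} [NormedAddCommGroup E] [NormedSpace ℝ E] [NormedAddCommGroup F]
  [NormedSpace ℝ F]

theorem inv_norm_smul_smul_of_norm_eq_one {x : E} (hx : ‖x‖ = 1) {c : ℝ} (hc : 0 < c) :
    ‖c • x‖⁻¹ • c • x = x := by
  rw [norm_smul, hx, mul_one, Real.norm_of_nonneg hc.le, smul_smul, inv_mul_cancel₀ hc.ne',
    one_smul]

noncomputable def ContinuousLinearEquiv.unitSphereHomeomorph (e : E ≃L[ℝ] F) :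
    Metric.sphere (0 : E) 1 ≃ₜ Metric.sphere (0 : F) 1 where
  toFun x := ⟨‖e x‖⁻¹ • e x, mem_sphere_zero_iff_norm.2 <|
    norm_smul_inv_norm (e.map_ne_zero_iff.2 (ne_zero_of_mem_unit_sphere x))⟩
  invFun y := ⟨‖e.symm y‖⁻¹ • e.symm y, mem_sphere_zero_iff_norm.2 <|
    norm_smul_inv_norm (e.symm.map_ne_zero_iff.2 (ne_zero_of_mem_unit_sphere y))⟩
  left_inv x := Subtype.ext <| by
    simpa using inv_norm_smul_smul_of_norm_eq_one (mem_sphere_zero_iff_norm.1 x.2)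
      (inv_pos.2 (norm_pos_iff.2 (e.map_ne_zero_iff.2 (ne_zero_of_mem_unit_sphere x))))
  right_inv y := Subtype.ext <| by
    simpa using inv_norm_smul_smul_of_norm_eq_one (mem_sphere_zero_iff_norm.1 y.2)
      (inv_pos.2 (norm_pos_iff.2 (e.symm.map_ne_zero_iff.2 (ne_zero_of_mem_unit_sphere y))))
  continuous_toFun := by
    refine Continuous.subtype_mk (Continuous.smul ?_ (by fun_prop)) _
    exact (by fun_prop : Continuous fun x : Metric.sphere (0 : E) 1 => ‖e x‖).inv₀
      fun x => norm_ne_zero_iff.2 (e.map_ne_zero_iff.2 (ne_zero_of_mem_unit_sphere x))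
  continuous_invFun := by
    refine Continuous.subtype_mk (Continuous.smul ?_ (by fun_prop)) _
    exact (by fun_prop : Continuous fun y : Metric.sphere (0 : F) 1 => ‖e.symm y‖).inv₀
      fun y => norm_ne_zero_iff.2 (e.symm.map_ne_zero_iff.2 (ne_zero_of_mem_unit_sphere y))

end UnitSphere

section LeafGraph

variable {V : Type*} [DecidableEq V] (G : SimpleGraph V)

theorem addLeaves_faces_leafEdge (a : V ⊕ V) : (addLeaves G).faces {a, a.swap} := by
  refine ⟨Finset.insert_nonempty _ _, ?_⟩
  rcases a with u | u
  · exact ⟨_, Or.inr ⟨u, rfl⟩, subset_rfl⟩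
  · exact ⟨_, Or.inr ⟨u, rfl⟩, (Finset.pair_comm _ _).subset⟩

-- `leafPair G (.inr u)` is the paper's leaf vector `(u', u'u)`; `leafPair G (.inl u)` is
-- `(u, uu')`.
def leafPair (a : V ⊕ V) : VPair (addLeaves G) where
  lo := {a}
  hi := {a, a.swap}
  lo_face := (addLeaves G).down_closed (addLeaves_faces_leafEdge G a) (by simp)
    (Finset.singleton_nonempty a)
  hi_face := addLeaves_faces_leafEdge G a
  lo_sub := by simp
  card_eq := by rcases a with u | u <;> simp

def IsGraphPair (p : VPair (addLeaves G)) : Prop :=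
  ∃ b c, G.Adj b c ∧ p.lo = {.inl b} ∧ p.hi = {.inl b, .inl c}

variable {G}

theorem leafPair_injective : Function.Injective (leafPair G) := fun a a' h => by
  simpa [leafPair] using congrArg VPair.lo h

theorem not_isGraphPair_leafPair (a : V ⊕ V) : ¬IsGraphPair G (leafPair G a) := by
  rintro ⟨b, c, -, hlo, hhi⟩
  have : a.swap ∈ ({.inl b, .inl c} : Finset (V ⊕ V)) := hhi ▸ by simp [leafPair]
  rcases a with u | u <;> simp_all [leafPair]

theorem VPair.eq_leafPair_or_isGraphPair (p : VPair (addLeaves G)) :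
    (∃ a, p = leafPair G a) ∨ IsGraphPair G p := by
  obtain ⟨-, τ, ⟨x, y, hxy, rfl⟩ | ⟨u, rfl⟩, hsub⟩ := p.hi_face
  · obtain ⟨hhi, hlo | hlo⟩ := p.eq_of_hi_subset_pair hsub
    · exact .inr ⟨x, y, hxy, hlo, hhi⟩
    · exact .inr ⟨y, x, hxy.symm, hlo, hhi.trans (Finset.pair_comm _ _)⟩
  · obtain ⟨hhi, hlo | hlo⟩ := p.eq_of_hi_subset_pair hsub
    · exact .inl ⟨.inl u, VPair.ext hlo hhi⟩
    · exact .inl ⟨.inr u, VPair.ext hlo (hhi.trans (Finset.pair_comm _ _))⟩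

theorem VPair.eq_leafPair_of_inr_mem_hi {p : VPair (addLeaves G)} {b : V}
    (hb : .inr b ∈ p.hi) : p = leafPair G (.inl b) ∨ p = leafPair G (.inr b) := by
  rcases p.eq_leafPair_or_isGraphPair with ⟨a, rfl⟩ | ⟨b', c, -, -, hhi⟩
  · rcases a with u | u <;> simp_all [leafPair]
  · simp [hhi] at hb

theorem IsGraphPair.exists_leafPair_dominates {p : VPair (addLeaves G)} (hp : IsGraphPair G p) :
    ∃ a, ∀ σ, (MorseComplex (addLeaves G)).faces σ → p ∈ σ →
      (MorseComplex (addLeaves G)).faces (insert (leafPair G a) σ) := by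
  obtain ⟨b, c, -, hlo, hhi⟩ := hp
  refine ⟨.inr b, fun σ ⟨_, hσ⟩ hpσ => ⟨Finset.insert_nonempty _ _, ?_⟩⟩
  change IsGVF (((insert (leafPair G (.inr b)) σ : Finset _) : Set (VPair (addLeaves G))))
  rw [Finset.coe_insert]
  refine hσ.insert fun q hq hsub => ?_
  rcases q.eq_leafPair_of_inr_mem_hi (hsub (Finset.mem_singleton_self _)) with rfl | rfl
  · have hne : leafPair G (.inl b) ≠ p := fun h => by
      have hmem : Sum.inr b ∈ p.hi := h ▸ by simp [leafPair]
      simp [hhi] at hmem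
    exact absurd (hlo.trans rfl) (hσ.1 p hpσ _ hq hne.symm).1
  · rfl

theorem morseFaces_and_not_isGraphPair_iff (σ : Finset (VPair (addLeaves G))) :
    ((MorseComplex (addLeaves G)).faces σ ∧ ∀ p ∈ σ, ¬IsGraphPair G p) ↔
      crossPolytopeFaces (leafPair G) σ := by
  constructor
  · rintro ⟨⟨hne, hdvf, -⟩, hσ⟩
    refine ⟨hne, fun p hp => (p.eq_leafPair_or_isGraphPair.resolve_right (hσ p hp)).imp
      fun a h => h.symm, fun a ⟨ha, ha'⟩ => ?_⟩
    have hlo : leafPair G a ≠ leafPair G a.swap := fun h => by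
      rcases a with u | u <;> simpa [leafPair] using congrArg VPair.lo h
    exact (hdvf _ ha _ ha' hlo).2.2.2 (by rcases a with u | u <;> exact Finset.pair_comm _ _)
  · rintro ⟨hne, hrange, hanti⟩
    have key : ∀ a a', leafPair G a ∈ σ → leafPair G a' ∈ σ → a ≠ a' →
        a' ∉ (leafPair G a).hi := fun a a' ha ha' haa' h => by
      rcases Finset.mem_insert.1 h with h | h
      · exact haa' h.symm
      · exact hanti a ⟨ha, Finset.mem_singleton.1 h ▸ ha'⟩
    refine ⟨⟨hne, fun p hp q hq hpq => ?_, fun ⟨k, hk, c, hc, hpath⟩ => ?_⟩, fun p hp => ?_⟩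
    · obtain ⟨a, rfl⟩ := hrange p hp
      obtain ⟨a', rfl⟩ := hrange q hq
      have haa' : a ≠ a' := fun h => hpq (h ▸ rfl)
      refine ⟨fun h => haa' (Finset.singleton_inj.1 h), VPair.lo_ne_hi_of_card_eq rfl,
        (VPair.lo_ne_hi_of_card_eq (p := leafPair G a') (q := leafPair G a) rfl).symm,
        fun h => key a a' hp hq haa' (h ▸ ?_)⟩
      simp [leafPair]
    · obtain ⟨a, ha⟩ := hrange _ (hc 0)
      obtain ⟨a', ha'⟩ := hrange _ (hc (0 + 1))
      obtain ⟨hsub, hlo, -⟩ := hpath 0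
      rw [← ha, ← ha'] at hsub hlo
      exact key a a' (ha ▸ hc 0) (ha' ▸ hc _) (fun h => hlo (h ▸ rfl))
        (hsub (Finset.mem_singleton_self a'))
    · obtain ⟨a, rfl⟩ := hrange p hp
      exact not_isGraphPair_leafPair a

end LeafGraph

theorem stmt_13_general {V : Type*} [Fintype V] [DecidableEq V] (G : SimpleGraph V) :
    Nonempty (ContinuousMap.HomotopyEquiv
      (realization (MorseComplex (addLeaves G)))
      (Metric.sphere (0 : EuclideanSpace ℝ (Fin (Fintype.card V))) 1)) := by
  classical
  have := Fintype.ofFinite (VPair (addLeaves G))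
  obtain ⟨e⟩ := nonempty_homotopyEquiv_deleteFinset_of_dominated
    (MorseComplex (addLeaves G)).down_closed (Finset.univ.filter (IsGraphPair G)) fun p hp => by
      obtain ⟨a, ha⟩ := (Finset.mem_filter.1 hp).2.exists_leafPair_dominates
      exact ⟨leafPair G a, by simpa using not_isGraphPair_leafPair a, ha⟩
  have hfaces : (fun σ => (MorseComplex (addLeaves G)).faces σ ∧
      Disjoint (Finset.univ.filter (IsGraphPair G)) σ) = crossPolytopeFaces (leafPair G) :=
    funext fun σ => propext <| by
      rw [← morseFaces_and_not_isGraphPair_iff, Finset.disjoint_right]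
      simp
  let toEuclidean : (PiLp 1 fun _ : V => ℝ) ≃L[ℝ] EuclideanSpace ℝ (Fin (Fintype.card V)) :=
    ((WithLp.linearEquiv 1 ℝ (V → ℝ)).trans
      ((LinearEquiv.funCongrLeft ℝ ℝ (Fintype.equivFin V).symm).trans
        (WithLp.linearEquiv 2 ℝ _).symm)).toContinuousLinearEquiv
  exact ⟨e.trans (((Homeomorph.setCongr (congrArg realizationOf hfaces)).trans
    ((crossPolytopeHomeomorph leafPair_injective).trans
      toEuclidean.unitSphereHomeomorph)).toHomotopyEquiv)⟩

/-- for a connected graph `G` with `v` vertices,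
`M(L(G)) ≃ S^{v-1}`. -/
theorem stmt_13 {V : Type*} [Fintype V] [DecidableEq V] (G : SimpleGraph V)
    (hc : G.Connected) :
    Nonempty (ContinuousMap.HomotopyEquiv
      (realization (MorseComplex (addLeaves G)))
      (Metric.sphere (0 : EuclideanSpace ℝ (Fin (Fintype.card V))) 1)) :=
  stmt_13_general G
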